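/- For commuting block matrices: if A, A', B, B' are 2×2 matrices over a supercommutative ring with A, A' of the form [[α₁, α₂],[0, α₁]] (entries even, α₁ invertible), B, B' of the form [[t, βt],[0, t]] with t odd, such that AB = BA, A'B' = B'A', and BB' = −B'B, then the group commutator of the supermatrices (A|B) := [[A, B],[B, A]] and (A'|B') satisfies [(A|B),(A'|B')] = (E + 2A⁻¹A'⁻¹BB' | 0), where multiplication is (A|B)(A'|B') = (AA' + BB' | AB' + BA') and (A|B)⁻¹ = (A⁻¹ | −A⁻²B). -/
import Mathlib


/-- Multiplication of supermatrices `(A|B) = [[A,B],[B,A]]`: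
`(A|B)(A'|B') = (AA' + BB' | AB' + BA')`. -/
def pmul {C : Type} [Ring C]
    (p q : Matrix (Fin 2) (Fin 2) C × Matrix (Fin 2) (Fin 2) C) :
    Matrix (Fin 2) (Fin 2) C × Matrix (Fin 2) (Fin 2) C :=
  (p.1 * q.1 + p.2 * q.2, p.1 * q.2 + p.2 * q.1)


lemma mul_left_comm'' {C : Type} [Ring C] {u v : C} (h : v * u = u * v) (x : C) :
    v * (u * x) = u * (v * x) := by
  rw [← mul_assoc, h, mul_assoc]

set_option maxHeartbeats 3200000 in
/-- For the elements `(A|B)` of the supergroup `L`, the group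
commutator is `[(A|B), (A'|B')] = (E + 2A⁻¹A'⁻¹BB' | 0)`. -/
theorem supermatrix_commutator
    {C : Type} [Ring C]
    -- even entries (central in a supercommutative superalgebra) …
    (α₁ α₂ β₁ α₁' α₂' β₁' : C)
    (hα₁ : ∀ y : C, Commute α₁ y) (hα₂ : ∀ y : C, Commute α₂ y)
    (hβ₁ : ∀ y : C, Commute β₁ y) (hα₁' : ∀ y : C, Commute α₁' y)
    (hα₂' : ∀ y : C, Commute α₂' y) (hβ₁' : ∀ y : C, Commute β₁' y)
    (hinv : α₁ * β₁ = 1 ∧ β₁ * α₁ = 1) (hinv' : α₁' * β₁' = 1 ∧ β₁' * α₁' = 1)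
    -- … and odd entries, which anticommute and square to zero
    (t t' : C) (hanti : t * t' = -(t' * t)) (ht : t * t = 0) (ht' : t' * t' = 0)
    (htα : ∀ x ∈ ({α₁, α₂, β₁, α₁', α₂', β₁'} : Set C), Commute t x ∧ Commute t' x)
    -- the matrices
    (A B A' B' Ainv A'inv : Matrix (Fin 2) (Fin 2) C)
    (hA : A = !![α₁, α₂; 0, α₁])
    (hB : B = !![t, (1 + β₁ * α₂) * t; 0, t])
    (hA' : A' = !![α₁', α₂'; 0, α₁'])
    (hB' : B' = !![t', (1 + β₁' * α₂') * t'; 0, t'])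
    (hAinv : Ainv = !![β₁, -(β₁ * β₁ * α₂); 0, β₁])
    (hA'inv : A'inv = !![β₁', -(β₁' * β₁' * α₂'); 0, β₁']) :
    pmul (pmul (pmul (Ainv, -(Ainv * Ainv * B)) (A'inv, -(A'inv * A'inv * B')))
        (A, B)) (A', B') =
      (1 + 2 • (Ainv * A'inv * B * B'), 0) := by
  obtain ⟨hi1, hi2⟩ := hinv
  obtain ⟨hi1', hi2'⟩ := hinv'
  have r1 : α₁ * t = t * α₁ := (hα₁ t).eq
  have s1 : ∀ x : C, α₁ * (t * x) = t * (α₁ * x) := fun x => mul_left_comm'' r1 x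
  have r2 : α₁ * t' = t' * α₁ := (hα₁ t').eq
  have s2 : ∀ x : C, α₁ * (t' * x) = t' * (α₁ * x) := fun x => mul_left_comm'' r2 x
  have r3 : β₁ * t = t * β₁ := (hβ₁ t).eq
  have s3 : ∀ x : C, β₁ * (t * x) = t * (β₁ * x) := fun x => mul_left_comm'' r3 x
  have r4 : β₁ * t' = t' * β₁ := (hβ₁ t').eq
  have s4 : ∀ x : C, β₁ * (t' * x) = t' * (β₁ * x) := fun x => mul_left_comm'' r4 x
  have r5 : β₁ * α₁ = α₁ * β₁ := (hβ₁ α₁).eq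
  have s5 : ∀ x : C, β₁ * (α₁ * x) = α₁ * (β₁ * x) := fun x => mul_left_comm'' r5 x
  have r6 : α₂ * t = t * α₂ := (hα₂ t).eq
  have s6 : ∀ x : C, α₂ * (t * x) = t * (α₂ * x) := fun x => mul_left_comm'' r6 x
  have r7 : α₂ * t' = t' * α₂ := (hα₂ t').eq
  have s7 : ∀ x : C, α₂ * (t' * x) = t' * (α₂ * x) := fun x => mul_left_comm'' r7 x
  have r8 : α₂ * α₁ = α₁ * α₂ := (hα₂ α₁).eq
  have s8 : ∀ x : C, α₂ * (α₁ * x) = α₁ * (α₂ * x) := fun x => mul_left_comm'' r8 x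
  have r9 : α₂ * β₁ = β₁ * α₂ := (hα₂ β₁).eq
  have s9 : ∀ x : C, α₂ * (β₁ * x) = β₁ * (α₂ * x) := fun x => mul_left_comm'' r9 x
  have r10 : α₁' * t = t * α₁' := (hα₁' t).eq
  have s10 : ∀ x : C, α₁' * (t * x) = t * (α₁' * x) := fun x => mul_left_comm'' r10 x
  have r11 : α₁' * t' = t' * α₁' := (hα₁' t').eq
  have s11 : ∀ x : C, α₁' * (t' * x) = t' * (α₁' * x) := fun x => mul_left_comm'' r11 x
  have r12 : α₁' * α₁ = α₁ * α₁' := (hα₁' α₁).eq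
  have s12 : ∀ x : C, α₁' * (α₁ * x) = α₁ * (α₁' * x) := fun x => mul_left_comm'' r12 x
  have r13 : α₁' * β₁ = β₁ * α₁' := (hα₁' β₁).eq
  have s13 : ∀ x : C, α₁' * (β₁ * x) = β₁ * (α₁' * x) := fun x => mul_left_comm'' r13 x
  have r14 : α₁' * α₂ = α₂ * α₁' := (hα₁' α₂).eq
  have s14 : ∀ x : C, α₁' * (α₂ * x) = α₂ * (α₁' * x) := fun x => mul_left_comm'' r14 x
  have r15 : β₁' * t = t * β₁' := (hβ₁' t).eq
  have s15 : ∀ x : C, β₁' * (t * x) = t * (β₁' * x) := fun x => mul_left_comm'' r15 x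
  have r16 : β₁' * t' = t' * β₁' := (hβ₁' t').eq
  have s16 : ∀ x : C, β₁' * (t' * x) = t' * (β₁' * x) := fun x => mul_left_comm'' r16 x
  have r17 : β₁' * α₁ = α₁ * β₁' := (hβ₁' α₁).eq
  have s17 : ∀ x : C, β₁' * (α₁ * x) = α₁ * (β₁' * x) := fun x => mul_left_comm'' r17 x
  have r18 : β₁' * β₁ = β₁ * β₁' := (hβ₁' β₁).eq
  have s18 : ∀ x : C, β₁' * (β₁ * x) = β₁ * (β₁' * x) := fun x => mul_left_comm'' r18 x
  have r19 : β₁' * α₂ = α₂ * β₁' := (hβ₁' α₂).eq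
  have s19 : ∀ x : C, β₁' * (α₂ * x) = α₂ * (β₁' * x) := fun x => mul_left_comm'' r19 x
  have r20 : β₁' * α₁' = α₁' * β₁' := (hβ₁' α₁').eq
  have s20 : ∀ x : C, β₁' * (α₁' * x) = α₁' * (β₁' * x) := fun x => mul_left_comm'' r20 x
  have r21 : α₂' * t = t * α₂' := (hα₂' t).eq
  have s21 : ∀ x : C, α₂' * (t * x) = t * (α₂' * x) := fun x => mul_left_comm'' r21 x
  have r22 : α₂' * t' = t' * α₂' := (hα₂' t').eq
  have s22 : ∀ x : C, α₂' * (t' * x) = t' * (α₂' * x) := fun x => mul_left_comm'' r22 x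
  have r23 : α₂' * α₁ = α₁ * α₂' := (hα₂' α₁).eq
  have s23 : ∀ x : C, α₂' * (α₁ * x) = α₁ * (α₂' * x) := fun x => mul_left_comm'' r23 x
  have r24 : α₂' * β₁ = β₁ * α₂' := (hα₂' β₁).eq
  have s24 : ∀ x : C, α₂' * (β₁ * x) = β₁ * (α₂' * x) := fun x => mul_left_comm'' r24 x
  have r25 : α₂' * α₂ = α₂ * α₂' := (hα₂' α₂).eq
  have s25 : ∀ x : C, α₂' * (α₂ * x) = α₂ * (α₂' * x) := fun x => mul_left_comm'' r25 x
  have r26 : α₂' * α₁' = α₁' * α₂' := (hα₂' α₁').eq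
  have s26 : ∀ x : C, α₂' * (α₁' * x) = α₁' * (α₂' * x) := fun x => mul_left_comm'' r26 x
  have r27 : α₂' * β₁' = β₁' * α₂' := (hα₂' β₁').eq
  have s27 : ∀ x : C, α₂' * (β₁' * x) = β₁' * (α₂' * x) := fun x => mul_left_comm'' r27 x
  have c1 : ∀ x : C, α₁ * (β₁ * x) = x := fun x => by rw [← mul_assoc, hi1, one_mul]
  have c1' : ∀ x : C, α₁' * (β₁' * x) = x := fun x => by rw [← mul_assoc, hi1', one_mul]
  have q1 : ∀ x : C, t * (t * x) = 0 := fun x => by rw [← mul_assoc, ht, zero_mul]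
  have q2 : ∀ x : C, t' * (t' * x) = 0 := fun x => by rw [← mul_assoc, ht', zero_mul]
  have a0 : t' * t = -(t * t') := by rw [hanti, neg_neg]
  have a1 : ∀ x : C, t' * (t * x) = -(t * (t' * x)) := fun x => by
    rw [← mul_assoc, a0, neg_mul, mul_assoc]
  subst hA hB hA' hB' hAinv hA'inv
  simp only [pmul, Prod.mk.injEq]
  constructor <;>
  · ext i j
    fin_cases i <;> fin_cases j <;>
    · simp [Matrix.mul_apply, Fin.sum_univ_two, Matrix.one_apply]
      all_goals simp only [mul_add, add_mul, neg_mul, mul_neg, neg_neg, mul_one, one_mul, mul_zero,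
        zero_mul, add_zero, zero_add, neg_zero, two_smul, two_mul, mul_assoc,
        r1, s1, r2, s2, r3, s3, r4, s4, r5, s5, r6, s6, r7, s7, r8, s8, r9, s9, r10, s10, r11, s11, r12, s12, r13, s13, r14, s14, r15, s15, r16, s16, r17, s17, r18, s18, r19, s19, r20, s20, r21, s21, r22, s22, r23, s23, r24, s24, r25, s25, r26, s26, r27, s27, c1, c1', hi1, hi1', q1, q2, a0, a1, ht, ht']
      all_goals abel
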